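/- arXiv:2507.13777 — 3 statements merged into one kernel-verified Lean document; each statement's English description precedes it below -/
import Mathlib

section
/- For the graph G_{t,ω} (t ≥ 2, ω ≥ 3), the local adjacency metric dimension of G_{t,ω} equals t(ω−2). -/
open SimpleGraph

variable {V : Type*} [Fintype V] [DecidableEq V]

/-- `S` is a local resolving set of `G`. -/
def IsLocalResolving (G : SimpleGraph V) (S : Finset V) : Prop :=
  ∀ u v : V, G.Adj u v → u ∉ S → v ∉ S → ∃ w ∈ S, G.dist u w ≠ G.dist v w

/-- The local metric dimension of `G`. -/
noncomputable def dimL (G : SimpleGraph V) : ℕ :=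
  sInf {k | ∃ S : Finset V, S.card = k ∧ IsLocalResolving G S}

/-- `S` is a local adjacency resolving set of `G`. -/
def IsLocalAdjResolving (G : SimpleGraph V) (S : Finset V) : Prop :=
  ∀ u v : V, G.Adj u v → u ∉ S → v ∉ S → ∃ w ∈ S, Xor' (G.Adj w u) (G.Adj w v)

/-- The local adjacency metric dimension of `G`. -/
noncomputable def dimAL (G : SimpleGraph V) : ℕ :=
  sInf {k | ∃ S : Finset V, S.card = k ∧ IsLocalAdjResolving G S}

/-- `S` is a resolving set of `G`. -/
def IsResolving (G : SimpleGraph V) (S : Finset V) : Prop :=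
  ∀ u v : V, u ≠ v → u ∉ S → v ∉ S → ∃ w ∈ S, G.dist u w ≠ G.dist v w

/-- The metric dimension of `G`. -/
noncomputable def dimM (G : SimpleGraph V) : ℕ :=
  sInf {k | ∃ S : Finset V, S.card = k ∧ IsResolving G S}

/-- `S` is an adjacency resolving set of `G`. -/
def IsAdjResolving (G : SimpleGraph V) (S : Finset V) : Prop :=
  ∀ u v : V, u ≠ v → u ∉ S → v ∉ S → ∃ w ∈ S, Xor' (G.Adj w u) (G.Adj w v)

/-- The adjacency metric dimension of `G`. -/
noncomputable def dimA (G : SimpleGraph V) : ℕ :=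
  sInf {k | ∃ S : Finset V, S.card = k ∧ IsAdjResolving G S}

/-- The graph obtained from `t` disjoint copies of `K_ω` by identifying one chosen
vertex of each copy into a single vertex `none`. The vertex `some (i, j)` is the
`j`-th non-hub vertex of the `i`-th copy. -/
def Gtw (t ω : ℕ) : SimpleGraph (Option (Fin t × Fin (ω - 1))) where
  Adj a b := a ≠ b ∧ ∀ p q, a = some p → b = some q → p.1 = q.1
  symm := by
    constructor
    rintro a b ⟨h1, h2⟩
    exact ⟨h1.symm, fun p q hp hq => (h2 q p hq hp).symm⟩
  loopless := by
    constructor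
    rintro a ⟨h, -⟩
    exact h rfl

/-!
Two non-hub vertices of the same copy of `K_ω` are adjacent twins, so no third vertex tells them
apart: a local adjacency resolving set misses at most one non-hub vertex per copy, hence has at
least `t (ω - 1) - t` elements. Conversely, leaving out the hub and one vertex `j₀` of every copy
works: the only adjacent pairs left are the hub and some `(i, j₀)`, which are separated by a
vertex `(i', j₁)` of another copy with `j₁ ≠ j₀`.
-/

open Finset

lemma dimAL_eq_card_of_forall_card_le {V : Type*} [Fintype V] [DecidableEq V]
    {G : SimpleGraph V} {S : Finset V} (hS : IsLocalAdjResolving G S)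
    (hmin : ∀ T, IsLocalAdjResolving G T → #S ≤ #T) : dimAL G = #S :=
  IsLeast.csInf_eq ⟨⟨S, rfl, hS⟩, by rintro _ ⟨T, rfl, hT⟩; exact hmin T hT⟩

lemma IsLocalAdjResolving.mem_or_mem_of_twins {V : Type*} {G : SimpleGraph V} {S : Finset V}
    (hS : IsLocalAdjResolving G S) {u v : V} (huv : G.Adj u v)
    (htwin : ∀ w, w ≠ u → w ≠ v → (G.Adj w u ↔ G.Adj w v)) : u ∈ S ∨ v ∈ S := by
  by_contra! h
  obtain ⟨w, hw, hxor⟩ := hS u v huv h.1 h.2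
  exact (xor_iff_not_iff _ _).mp hxor
    (htwin w (fun hwu => h.1 (hwu ▸ hw)) (fun hwv => h.2 (hwv ▸ hw)))

namespace Gtw

variable {t ω : ℕ}

@[simp]
lemma adj_some_none (p : Fin t × Fin (ω - 1)) : (Gtw t ω).Adj (some p) none :=
  ⟨Option.some_ne_none p, by simp⟩

@[simp]
lemma adj_none_some (p : Fin t × Fin (ω - 1)) : (Gtw t ω).Adj none (some p) :=
  (adj_some_none p).symm

@[simp]
lemma adj_some_some {p q : Fin t × Fin (ω - 1)} :
    (Gtw t ω).Adj (some p) (some q) ↔ p ≠ q ∧ p.1 = q.1 := by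
  refine ⟨fun ⟨hne, hfst⟩ => ⟨fun h => hne (h ▸ rfl), hfst p q rfl rfl⟩, fun ⟨hne, hfst⟩ => ?_⟩
  exact ⟨by simpa using hne, by rintro _ _ ⟨⟩ ⟨⟩; exact hfst⟩

lemma injOn_fst_of_isLocalAdjResolving {T : Finset (Option (Fin t × Fin (ω - 1)))}
    (hT : IsLocalAdjResolving (Gtw t ω) T) : Set.InjOn Prod.fst {p | some p ∉ T} := by
  intro p hp q hq hpq
  by_contra hne
  refine (hT.mem_or_mem_of_twins (adj_some_some.mpr ⟨hne, hpq⟩) ?_).elim hp hq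
  rintro (_ | r) hrp hrq
  · simp
  · have hrp : r ≠ p := fun h => hrp (h ▸ rfl)
    have hrq : r ≠ q := fun h => hrq (h ▸ rfl)
    simp [hrp, hrq, hpq]

lemma le_card_of_isLocalAdjResolving {T : Finset (Option (Fin t × Fin (ω - 1)))}
    (hT : IsLocalAdjResolving (Gtw t ω) T) : t * (ω - 2) ≤ #T := by
  have hsplit := card_filter_add_card_filter_not (s := univ) (fun p => some p ∈ T)
  have hin : #(univ.filter fun p => some p ∈ T) ≤ #T :=
    card_le_card_of_injOn some (fun p hp => (mem_filter.mp hp).2)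
      (Option.some_injective _).injOn
  have hout : #(univ.filter fun p => some p ∉ T) ≤ #(univ : Finset (Fin t)) :=
    card_le_card_of_injOn Prod.fst (fun _ _ => mem_univ _)
      ((injOn_fst_of_isLocalAdjResolving hT).mono fun p hp => (mem_filter.mp hp).2)
  simp only [card_univ, Fintype.card_prod, Fintype.card_fin] at hsplit hout
  rw [show ω - 2 = ω - 1 - 1 by omega, Nat.mul_sub_one]
  omega

def resolvingSet (j₀ : Fin (ω - 1)) : Finset (Option (Fin t × Fin (ω - 1))) :=
  (univ ×ˢ {j₀}ᶜ).map Function.Embedding.some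

lemma card_resolvingSet (j₀ : Fin (ω - 1)) : #(resolvingSet (t := t) j₀) = t * (ω - 2) := by
  simp only [resolvingSet, card_map, card_product, card_univ, card_compl, card_singleton,
    Fintype.card_fin, Nat.sub_sub]

lemma eq_none_or_of_notMem_resolvingSet {j₀ : Fin (ω - 1)} {a : Option (Fin t × Fin (ω - 1))}
    (ha : a ∉ resolvingSet j₀) : a = none ∨ ∃ i, a = some (i, j₀) := by
  rcases a with _ | ⟨i, j⟩
  · exact .inl rfl
  · simp_all [resolvingSet]

lemma isLocalAdjResolving_resolvingSet [Nontrivial (Fin t)] [Nontrivial (Fin (ω - 1))]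
    (j₀ : Fin (ω - 1)) : IsLocalAdjResolving (Gtw t ω) (resolvingSet j₀) := by
  have separate_hub (i : Fin t) : ∃ w ∈ resolvingSet j₀,
      Xor ((Gtw t ω).Adj w none) ((Gtw t ω).Adj w (some (i, j₀))) := by
    obtain ⟨i', hi'⟩ := exists_ne i
    obtain ⟨j₁, hj₁⟩ := exists_ne j₀
    exact ⟨some (i', j₁), by simp [resolvingSet, hj₁], .inl ⟨by simp, by simp [hi']⟩⟩
  intro u v huv hu hv
  rcases eq_none_or_of_notMem_resolvingSet hu with rfl | ⟨i, rfl⟩ <;>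
    rcases eq_none_or_of_notMem_resolvingSet hv with rfl | ⟨i', rfl⟩
  · exact absurd rfl huv.ne
  · exact separate_hub i'
  · obtain ⟨w, hw, hxor⟩ := separate_hub i
    exact ⟨w, hw, hxor.symm⟩
  · simp_all

end Gtw

theorem dimAL_Gtw (t ω : ℕ) (ht : 2 ≤ t) (hω : 3 ≤ ω) :
    dimAL (Gtw t ω) = t * (ω - 2) := by
  have := Fin.nontrivial_iff_two_le.mpr ht
  have : Nontrivial (Fin (ω - 1)) := Fin.nontrivial_iff_two_le.mpr (by omega)
  let j₀ : Fin (ω - 1) := ⟨0, by omega⟩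
  rw [← Gtw.card_resolvingSet (t := t) j₀]
  exact dimAL_eq_card_of_forall_card_le (Gtw.isLocalAdjResolving_resolvingSet j₀)
    fun T hT => (Gtw.card_resolvingSet j₀).trans_le (Gtw.le_card_of_isLocalAdjResolving hT)
end

section
/- If G is a finite simple connected triangle-free graph (ω(G) = 2) with n(G) ≥ 3, then dim_l(G) ≤ (2/5)·n(G). -/
open SimpleGraph

variable {V : Type*} [Fintype V] [DecidableEq V]

/-!
Take a depth-first spanning tree rooted at `r` and split the vertices into three classes by depth
mod 3. Every edge joins a vertex `x` to one of its descendants, so `x` has a child and, unless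
`x = r`, a parent; hence the closed neighbourhood of `x` meets every class, except that the root
may miss class 2, to which `r` is added. Each class `S` is thus vertex-edge dominating (every edge
has an end in `N[S]`), and the smallest has at most `(n + 1) / 3 ≤ 2n / 5` vertices once `n ≥ 3`.
In a triangle-free graph a vertex of `S` adjacent to one end of an edge outside `S` is not
adjacent to the other, so it separates the two ends by distance: `S` is a local resolving set.
-/

namespace SimpleGraph

variable {α : Type*} (G : SimpleGraph α)

def ReachableIn (s : Finset α) : α → α → Prop :=
  Relation.ReflTransGen fun a b => G.Adj a b ∧ b ∈ s

/-- Depth in a depth-first (normal) spanning tree of `G[s]` rooted at `r`, through the properties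
the argument uses: the neighbour one level down is the parent, and the neighbour one level up of
the shallower end of an edge is its child towards the other end. -/
structure IsDFSDepth (s : Finset α) (r : α) (ℓ : α → ℕ) : Prop where
  root : ℓ r = 0
  exists_down : ∀ x ∈ s, x ≠ r → ∃ y ∈ s, G.Adj x y ∧ ℓ y + 1 = ℓ x
  exists_up : ∀ x ∈ s, ∀ y ∈ s, G.Adj x y → ℓ x < ℓ y → ∃ z ∈ s, G.Adj x z ∧ ℓ z = ℓ x + 1
  ne_of_adj : ∀ x ∈ s, ∀ y ∈ s, G.Adj x y → ℓ x ≠ ℓ y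

def IsVertexEdgeDominating (S : Finset α) : Prop :=
  ∀ u v, G.Adj u v → ∃ w ∈ S, w = u ∨ w = v ∨ G.Adj w u ∨ G.Adj w v

variable {G}

theorem ReachableIn.restrict {s C : Finset α} {y x : α} (h : G.ReachableIn s y x)
    (hC : ∀ z ∈ s, G.ReachableIn s y z → z ∈ C) : G.ReachableIn C y x := by
  induction h with
  | refl => exact .refl
  | tail hyb hbc ih => exact ih.tail ⟨hbc.1, hC _ hbc.2 (hyb.tail hbc)⟩

theorem ReachableIn.sdiff [DecidableEq α] {s C : Finset α} {r x : α} (h : G.ReachableIn s r x)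
    (hx : x ∉ C) (hC : ∀ a ∈ C, ∀ b ∈ s, G.Adj a b → b ∈ C ∨ b = r) :
    G.ReachableIn (s \ C) r x := by
  induction h with
  | refl => exact .refl
  | @tail b c _ hbc ih =>
    by_cases hb : b ∈ C
    · obtain rfl : c = r := (hC b hb c hbc.2 hbc.1).resolve_left hx
      exact .refl
    · exact (ih hb).tail ⟨hbc.1, Finset.mem_sdiff.2 ⟨hbc.2, hx⟩⟩

theorem IsDFSDepth.glue [DecidableEq α] {C s : Finset α} {r y : α} {ℓ₁ ℓ₂ : α → ℕ}
    (h₁ : G.IsDFSDepth C y ℓ₁) (h₂ : G.IsDFSDepth s r ℓ₂) (hyC : y ∈ C) (hr : r ∈ s)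
    (hry : G.Adj r y) (hCs : Disjoint C s) (hcross : ∀ a ∈ C, ∀ b ∈ s, G.Adj a b → b = r) :
    G.IsDFSDepth (C ∪ s) r fun x => if x ∈ C then ℓ₁ x + 1 else ℓ₂ x := by
  have hrC : r ∉ C := Finset.disjoint_right.1 hCs hr
  have hmem : ∀ {x}, x ∈ C ∪ s → x ∉ C → x ∈ s := fun hx hxC =>
    (Finset.mem_union.1 hx).resolve_left hxC
  refine ⟨by simp [hrC, h₂.root], ?_, ?_, ?_⟩
  · intro x hx hxr
    by_cases hxC : x ∈ C
    · by_cases hxy : x = y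
      · subst hxy
        exact ⟨r, Finset.mem_union_right _ hr, hry.symm, by simp [hrC, hxC, h₂.root, h₁.root]⟩
      · obtain ⟨z, hz, hxz, hℓ⟩ := h₁.exists_down x hxC hxy
        exact ⟨z, Finset.mem_union_left _ hz, hxz, by simp [hxC, hz, hℓ]⟩
    · obtain ⟨z, hz, hxz, hℓ⟩ := h₂.exists_down x (hmem hx hxC) hxr
      have hzC : z ∉ C := Finset.disjoint_right.1 hCs hz
      exact ⟨z, Finset.mem_union_right _ hz, hxz, by simp [hxC, hzC, hℓ]⟩
  · intro x hx x' hx' hxx' hlt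
    by_cases hxC : x ∈ C <;> by_cases hx'C : x' ∈ C
    · obtain ⟨z, hz, hxz, hℓ⟩ := h₁.exists_up x hxC x' hx'C hxx' (by simpa [hxC, hx'C] using hlt)
      exact ⟨z, Finset.mem_union_left _ hz, hxz, by simp [hxC, hz, hℓ]⟩
    · obtain rfl := hcross x hxC x' (hmem hx' hx'C) hxx'
      simp [hxC, hrC, h₂.root] at hlt
    · obtain rfl := hcross x' hx'C x (hmem hx hxC) hxx'.symm
      exact ⟨y, Finset.mem_union_left _ hyC, hry, by simp [hxC, hyC, h₁.root, h₂.root]⟩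
    · obtain ⟨z, hz, hxz, hℓ⟩ :=
        h₂.exists_up x (hmem hx hxC) x' (hmem hx' hx'C) hxx' (by simpa [hxC, hx'C] using hlt)
      have hzC : z ∉ C := Finset.disjoint_right.1 hCs hz
      exact ⟨z, Finset.mem_union_right _ hz, hxz, by simp [hxC, hzC, hℓ]⟩
  · intro x hx x' hx' hxx'
    by_cases hxC : x ∈ C <;> by_cases hx'C : x' ∈ C
    · simpa [hxC, hx'C] using h₁.ne_of_adj x hxC x' hx'C hxx'
    · obtain rfl := hcross x hxC x' (hmem hx' hx'C) hxx'
      simp [hxC, hrC, h₂.root]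
    · obtain rfl := hcross x' hx'C x (hmem hx hxC) hxx'.symm
      simp [hx'C, hrC, h₂.root]
    · simpa [hxC, hx'C] using h₂.ne_of_adj x (hmem hx hxC) x' (hmem hx' hx'C) hxx'

theorem exists_isDFSDepth [DecidableEq α] {s : Finset α} {r : α} (hr : r ∈ s)
    (hconn : ∀ x ∈ s, G.ReachableIn s r x) : ∃ ℓ, G.IsDFSDepth s r ℓ := by
  classical
  induction s using Finset.strongInduction generalizing r with
  | H s ih =>
  by_cases hy : ∃ y ∈ s, G.Adj r y
  · obtain ⟨y, hys, hry⟩ := hy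
    -- `C` is the component of `y` in `s - r`, which a depth-first search from `r` explores first.
    set C := (s.erase r).filter (G.ReachableIn (s.erase r) y)
    have hCs : C ⊆ s := (Finset.filter_subset _ _).trans (Finset.erase_subset _ _)
    have hrC : r ∉ C := fun h => (Finset.mem_erase.1 (Finset.mem_filter.1 h).1).1 rfl
    have hyC : y ∈ C := Finset.mem_filter.2 ⟨Finset.mem_erase.2 ⟨hry.ne.symm, hys⟩, .refl⟩
    have hclosed : ∀ a ∈ C, ∀ b ∈ s, G.Adj a b → b ∈ C ∨ b = r := by
      intro a ha b hb hab
      refine or_iff_not_imp_right.2 fun hbr => ?_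
      have hb' : b ∈ s.erase r := Finset.mem_erase.2 ⟨hbr, hb⟩
      exact Finset.mem_filter.2 ⟨hb', (Finset.mem_filter.1 ha).2.tail ⟨hab, hb'⟩⟩
    obtain ⟨ℓ₁, h₁⟩ := ih C ((Finset.ssubset_iff_of_subset hCs).2 ⟨r, hr, hrC⟩)
      hyC fun x hx => (Finset.mem_filter.1 hx).2.restrict fun z hz hyz =>
        Finset.mem_filter.2 ⟨hz, hyz⟩
    obtain ⟨ℓ₂, h₂⟩ := ih (s \ C) (Finset.sdiff_ssubset hCs ⟨y, hyC⟩)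
      (Finset.mem_sdiff.2 ⟨hr, hrC⟩) fun x hx =>
        (hconn x (Finset.mem_sdiff.1 hx).1).sdiff (Finset.mem_sdiff.1 hx).2 hclosed
    have hglue := h₁.glue h₂ hyC (Finset.mem_sdiff.2 ⟨hr, hrC⟩) hry Finset.disjoint_sdiff
      fun a ha b hb hab => (hclosed a ha b (Finset.mem_sdiff.1 hb).1 hab).resolve_left
        (Finset.mem_sdiff.1 hb).2
    exact ⟨_, Finset.union_sdiff_of_subset hCs ▸ hglue⟩
  · push Not at hy
    have hsr : ∀ x ∈ s, x = r := fun x hx => by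
      rcases (hconn x hx).cases_head with h | ⟨y, ⟨hry, hys⟩, -⟩
      · exact h.symm
      · exact absurd hry (hy y hys)
    refine ⟨fun _ => 0, rfl, fun x hx hxr => absurd (hsr x hx) hxr, ?_, ?_⟩ <;>
    · intro x hx x' hx' hxx'
      rw [hsr x hx, hsr x' hx'] at hxx'
      exact absurd hxx' G.irrefl

theorem IsDFSDepth.isVertexEdgeDominating [Fintype α] {r : α} {ℓ : α → ℕ}
    (h : G.IsDFSDepth Finset.univ r ℓ) {S : Finset α} {i : ℕ} (hi : i < 3)
    (hS : ∀ x, ℓ x % 3 = i → x ∈ S) (hr : i = 2 → r ∈ S) : G.IsVertexEdgeDominating S := by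
  have hlow : ∀ x y, G.Adj x y → ℓ x < ℓ y → ∃ w ∈ S, w = x ∨ G.Adj w x := by
    intro x y hxy hlt
    obtain ⟨z, -, hxz, hz⟩ := h.exists_up x (Finset.mem_univ _) y (Finset.mem_univ _) hxy hlt
    by_cases hxr : x = r
    · subst hxr
      rcases (by omega : i = 0 ∨ i = 1 ∨ i = 2) with rfl | rfl | rfl
      · exact ⟨x, hS x (by simp [h.root]), .inl rfl⟩
      · exact ⟨z, hS z (by simp [hz, h.root]), .inr hxz.symm⟩
      · exact ⟨x, hr rfl, .inl rfl⟩
    · obtain ⟨y', -, hxy', hy'⟩ := h.exists_down x (Finset.mem_univ _) hxr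
      rcases (by omega : ℓ y' % 3 = i ∨ ℓ x % 3 = i ∨ ℓ z % 3 = i) with hc | hc | hc
      · exact ⟨y', hS y' hc, .inr hxy'.symm⟩
      · exact ⟨x, hS x hc, .inl rfl⟩
      · exact ⟨z, hS z hc, .inr hxz.symm⟩
  intro u v huv
  rcases lt_or_gt_of_ne (h.ne_of_adj u (Finset.mem_univ _) v (Finset.mem_univ _) huv) with
    hlt | hlt
  · obtain ⟨w, hw, hwu | hwu⟩ := hlow u v huv hlt
    · exact ⟨w, hw, .inl hwu⟩
    · exact ⟨w, hw, .inr (.inr (.inl hwu))⟩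
  · obtain ⟨w, hw, hwv | hwv⟩ := hlow v u huv.symm hlt
    · exact ⟨w, hw, .inr (.inl hwv)⟩
    · exact ⟨w, hw, .inr (.inr (.inr hwv))⟩

theorem Connected.exists_isVertexEdgeDominating_card_le [Fintype α] [DecidableEq α]
    (hG : G.Connected) :
    ∃ S : Finset α, G.IsVertexEdgeDominating S ∧ 3 * S.card ≤ Fintype.card α + 1 := by
  obtain ⟨r⟩ := hG.nonempty
  obtain ⟨ℓ, hℓ⟩ := G.exists_isDFSDepth (Finset.mem_univ r) fun x _ =>
    Relation.ReflTransGen.mono (fun _ _ hab => ⟨hab, Finset.mem_univ _⟩) _ _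
      ((reachable_iff_reflTransGen r x).1 (hG r x))
  let A : ℕ → Finset α := fun i => Finset.univ.filter (ℓ · % 3 = i)
  have hA : ∀ i x, ℓ x % 3 = i → x ∈ A i := fun _ _ hx =>
    Finset.mem_filter.2 ⟨Finset.mem_univ _, hx⟩
  have hsum : (A 0).card + (A 1).card + (A 2).card = Fintype.card α := by
    have := Finset.card_eq_sum_card_fiberwise (s := Finset.univ) (f := (ℓ · % 3))
      (t := Finset.range 3) fun x _ => Finset.mem_range.2 (Nat.mod_lt _ (by norm_num))
    simpa [Finset.sum_range_succ, A] using this.symm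
  by_cases h0 : 3 * (A 0).card ≤ Fintype.card α + 1
  · exact ⟨A 0, hℓ.isVertexEdgeDominating (by norm_num) (hA 0) (by omega), h0⟩
  by_cases h1 : 3 * (A 1).card ≤ Fintype.card α + 1
  · exact ⟨A 1, hℓ.isVertexEdgeDominating (by norm_num) (hA 1) (by omega), h1⟩
  refine ⟨insert r (A 2), hℓ.isVertexEdgeDominating (by norm_num)
    (fun x hx => Finset.mem_insert_of_mem (hA 2 x hx)) fun _ => Finset.mem_insert_self _ _, ?_⟩
  have := Finset.card_insert_le r (A 2)
  omega

theorem cliqueFree_of_cliqueNum_lt [Finite α] {n : ℕ} (h : G.cliqueNum < n) : G.CliqueFree n :=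
  fun _ ht => by
    have := IsClique.card_le_cliqueNum (tc := ht.isClique)
    rw [ht.card_eq] at this
    omega

theorem IsVertexEdgeDominating.isLocalAdjResolving [DecidableEq α] {S : Finset α}
    (hG : G.CliqueFree 3) (h : G.IsVertexEdgeDominating S) : IsLocalAdjResolving G S := by
  intro u v huv hu hv
  obtain ⟨w, hw, rfl | rfl | hwu | hwv⟩ := h u v huv
  · exact absurd hw hu
  · exact absurd hw hv
  · exact ⟨w, hw, .inl ⟨hwu, fun hwv => hG _ (is3Clique_triple_iff.2 ⟨hwu, hwv, huv⟩)⟩⟩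
  · exact ⟨w, hw, .inr ⟨hwv, fun hwu => hG _ (is3Clique_triple_iff.2 ⟨hwu, hwv, huv⟩)⟩⟩

end SimpleGraph

section

variable {α : Type*} {G : SimpleGraph α} {S : Finset α}

theorem IsLocalAdjResolving.isLocalResolving (h : IsLocalAdjResolving G S) :
    IsLocalResolving G S := by
  have hsep : ∀ {w a b}, G.Adj w a → ¬G.Adj w b → G.dist a w ≠ G.dist b w := fun ha hb hab =>
    hb (SimpleGraph.dist_eq_one_iff_adj.1 (hab ▸ SimpleGraph.dist_eq_one_iff_adj.2 ha.symm)).symm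
  intro u v huv hu hv
  obtain ⟨w, hw, ⟨hwu, hwv⟩ | ⟨hwv, hwu⟩⟩ := h u v huv hu hv
  · exact ⟨w, hw, hsep hwu hwv⟩
  · exact ⟨w, hw, (hsep hwv hwu).symm⟩

theorem dimL_le_card (h : IsLocalResolving G S) : dimL G ≤ S.card :=
  Nat.sInf_le ⟨S, rfl, h⟩

end

theorem dimL_le_two_fifths (G : SimpleGraph V) (hc : G.Connected)
    (hω : G.cliqueNum = 2) (hn : 3 ≤ Fintype.card V) :
    (dimL G : ℚ) ≤ (2 / 5) * (Fintype.card V : ℚ) := by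
  obtain ⟨S, hS, hcard⟩ := hc.exists_isVertexEdgeDominating_card_le
  have hres : IsLocalResolving G S :=
    (hS.isLocalAdjResolving (cliqueFree_of_cliqueNum_lt (by omega))).isLocalResolving
  have h5 : 5 * dimL G ≤ 2 * Fintype.card V := by
    have := dimL_le_card hres
    omega
  have : (5 : ℚ) * dimL G ≤ 2 * Fintype.card V := by exact_mod_cast h5
  linarith
end

section
/- A finite simple connected graph G with n(G) ≥ 2 satisfies dim_l(G) = n(G) − 2 if and only if ω(G) = n(G) − 1. -/
/-!
If `G` is not complete it has a non-edge `ac`, and `V ∖ {a, c}` is trivially a local resolving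
set, so `dim_l(G) ≤ n - 2`; the complete graph has `dim_l = n - 1`.

A vertex of a local resolving set `S` that separates two vertices of a clique lies outside the
clique. If `V ∖ {x}` is a clique, then three vertices outside `S` would be pairwise adjacent and
separated by `x`, i.e. have three pairwise distinct distances to `x` differing pairwise by at
most one; so `|S| ≥ n - 2`.

Conversely, if `dim_l(G) = n - 2`, then for every triple `{u, v, w}` with `u ≁ v` the
complement of the triple is not locally resolving, which forces `w` to have the same neighbours
as `u` or as `v` outside the triple. For a non-edge `ac` this makes every other vertex such a
twin of `a` or of `c`. If all of them are adjacent to `a`, then `G - c` is complete (and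
symmetrically). Otherwise a vertex adjacent to `c` only and one adjacent to `a` only rule out
common neighbours of `a` and `c`, and then no edge leaves the closed neighbourhood of `a`,
contradicting connectivity.
-/

open SimpleGraph

variable {V : Type*} [Fintype V] [DecidableEq V]

open Finset

section

variable {W : Type*} {G : SimpleGraph W}

namespace SimpleGraph

section Clique

variable [Fintype W]

lemma cliqueNum_le_card : G.cliqueNum ≤ Fintype.card W := by
  obtain ⟨K, hK⟩ := G.exists_isNClique_cliqueNum
  exact hK.card_eq ▸ card_le_univ K

lemma cliqueNum_lt_card (hG : G ≠ ⊤) : G.cliqueNum < Fintype.card W := by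
  obtain ⟨K, hK⟩ := G.exists_isNClique_cliqueNum
  refine lt_of_le_of_ne cliqueNum_le_card fun h => hG ?_
  rw [← isClique_univ, ← Finset.coe_univ, ← eq_univ_of_card K (hK.card_eq.trans h)]
  exact hK.isClique

lemma cliqueNum_top : (⊤ : SimpleGraph W).cliqueNum = Fintype.card W :=
  le_antisymm cliqueNum_le_card
    (card_univ (α := W) ▸ IsClique.card_le_cliqueNum (tc := by simp))

lemma IsClique.card_sub_one_le_cliqueNum [DecidableEq W] {x : W}
    (h : G.IsClique ({x}ᶜ : Set W)) : Fintype.card W - 1 ≤ G.cliqueNum := by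
  have := IsClique.card_le_cliqueNum (G := G) (t := {x}ᶜ) (tc := by simpa using h)
  rwa [card_compl, card_singleton] at this

lemma exists_isClique_compl_singleton_of_cliqueNum [DecidableEq W]
    (hV : 0 < Fintype.card W) (h : G.cliqueNum = Fintype.card W - 1) :
    ∃ x, G.IsClique ({x}ᶜ : Set W) := by
  obtain ⟨K, hK⟩ := G.exists_isNClique_cliqueNum
  obtain ⟨x, hx⟩ := card_eq_one.mp (by rw [card_compl, hK.card_eq, h]; omega : #Kᶜ = 1)
  refine ⟨x, ?_⟩
  rw [← coe_singleton, ← hx, coe_compl, compl_compl]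
  exact hK.isClique

end Clique

variable {T : Set W} {a c p q : W}

def IsTwinOff (G : SimpleGraph W) (T : Set W) (p q : W) : Prop :=
  G.Adj p q ∧ ∀ z ∉ T, (G.Adj p z ↔ G.Adj q z)

lemma IsTwinOff.symm (h : G.IsTwinOff T p q) : G.IsTwinOff T q p :=
  ⟨h.1.symm, fun z hz => (h.2 z hz).symm⟩

def HasTwinInTriples (G : SimpleGraph W) : Prop :=
  ∀ u v w, u ≠ v → w ≠ u → w ≠ v → ¬ G.Adj u v →
    G.IsTwinOff {u, v, w} w u ∨ G.IsTwinOff {u, v, w} w v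

namespace HasTwinInTriples

lemma isTwinOff_of_not_adj (hG : G.HasTwinInTriples) (hac : a ≠ c) (hnadj : ¬ G.Adj a c)
    {z : W} (hza : z ≠ a) (hzc : z ≠ c) (hz : ¬ G.Adj z c) :
    G.IsTwinOff {a, c, z} z a :=
  (hG a c z hac hza hzc hnadj).resolve_right fun h => hz h.1

lemma isClique_compl_singleton (hG : G.HasTwinInTriples) (hac : a ≠ c) (hnadj : ¬ G.Adj a c)
    (hA : ∀ z, z ≠ a → z ≠ c → G.Adj z a) : G.IsClique ({c}ᶜ : Set W) := by
  have twin_a : ∀ {p q}, q ≠ a → q ≠ c → p ≠ q → G.IsTwinOff {a, c, p} p a →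
      G.Adj p q :=
    fun hqa hqc hpq h => (h.2 _ (by simp [hqa, hqc, hpq.symm])).mpr (hA _ hqa hqc).symm
  intro p hpc q hqc hpq
  rw [Set.mem_compl_singleton_iff] at hpc hqc
  obtain rfl | hpa := eq_or_ne p a
  · exact (hA q (Ne.symm hpq) hqc).symm
  obtain rfl | hqa := eq_or_ne q a
  · exact hA p hpa hpc
  rcases hG a c p hac hpa hpc hnadj with hp | hp
  · exact twin_a hqa hqc hpq hp
  rcases hG a c q hac hqa hqc hnadj with hq | hq
  · exact (twin_a hpa hpc hpq.symm hq).symm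
  · exact (hp.2 q (by simp [hqa, hqc, hpq.symm])).mpr hq.1.symm

lemma not_adj_of_adj (hG : G.HasTwinInTriples) (hac : a ≠ c) (hnadj : ¬ G.Adj a c)
    {x y : W} (hxa : x ≠ a) (hxc : x ≠ c) (hx : ¬ G.Adj x a)
    (hya : y ≠ a) (hyc : y ≠ c) (hy : ¬ G.Adj y c) {p : W} (hpa : G.Adj p a) :
    ¬ G.Adj p c := by
  intro hpc
  have hy' := hG.isTwinOff_of_not_adj hac hnadj hya hyc hy
  have hxy : ¬ G.Adj y x := fun h =>
    hx ((hy'.2 x (by simp [hxa, hxc, (h.ne' : x ≠ y)])).mp h).symm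
  have hyx : y ≠ x := fun h => hx (h ▸ hy'.1)
  rcases hG y x p hyx (fun h => hy (h ▸ hpc)) (fun h => hx (h ▸ hpa)) hxy with h | h
  · exact hy ((h.2 c (by simp [hyc.symm, hxc.symm, hpc.ne'])).mp hpc)
  · exact hx ((h.2 a (by simp [hya.symm, hxa.symm, hpa.ne'])).mp hpa)

lemma not_connected (hG : G.HasTwinInTriples) (hac : a ≠ c) (hnadj : ¬ G.Adj a c)
    {x y : W} (hxa : x ≠ a) (hxc : x ≠ c) (hx : ¬ G.Adj x a)
    (hya : y ≠ a) (hyc : y ≠ c) (hy : ¬ G.Adj y c) : ¬ G.Connected := by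
  intro hconn
  obtain ⟨walk⟩ := hconn.preconnected a c
  obtain ⟨⟨⟨p, q⟩, hpq⟩, -, hp, hq⟩ :=
    walk.exists_boundary_dart {z | z = a ∨ G.Adj a z} (Or.inl rfl) (by simp [hac.symm, hnadj])
  simp only [Set.mem_ofPred_eq, not_or] at hp hq
  obtain rfl | hap := hp
  · exact hq.2 hpq
  have hpc := hG.not_adj_of_adj hac hnadj hxa hxc hx hya hyc hy hap.symm
  have hp' := hG.isTwinOff_of_not_adj hac hnadj hap.ne' (fun h => hnadj (h ▸ hap)) hpc
  obtain rfl | hqc := eq_or_ne q c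
  · exact hpc hpq
  · exact hq.2 ((hp'.2 q (by simp [hq.1, hqc, hpq.ne'])).mp hpq)

theorem exists_isClique_compl_singleton (hG : G.HasTwinInTriples) (hconn : G.Connected)
    (hac : a ≠ c) (hnadj : ¬ G.Adj a c) : ∃ x, G.IsClique ({x}ᶜ : Set W) := by
  by_cases hA : ∀ z, z ≠ a → z ≠ c → G.Adj z a
  · exact ⟨c, hG.isClique_compl_singleton hac hnadj hA⟩
  by_cases hC : ∀ z, z ≠ c → z ≠ a → G.Adj z c
  · exact ⟨a, hG.isClique_compl_singleton hac.symm (fun h => hnadj h.symm) hC⟩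
  push Not at hA hC
  obtain ⟨x, hxa, hxc, hx⟩ := hA
  obtain ⟨y, hyc, hya, hy⟩ := hC
  exact absurd hconn (hG.not_connected hac hnadj hxa hxc hx hya hyc hy)

end HasTwinInTriples

end SimpleGraph

variable {S : Finset W}

lemma dimL_le (hS : IsLocalResolving G S) : dimL G ≤ #S :=
  Nat.sInf_le ⟨S, rfl, hS⟩

lemma IsLocalResolving.exists_notMem_of_isClique (hS : IsLocalResolving G S) {K : Set W}
    (hK : G.IsClique K) {u v : W} (hu : u ∈ K) (hv : v ∈ K) (huv : u ≠ v) (huS : u ∉ S)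
    (hvS : v ∉ S) : ∃ w ∈ S, w ∉ K ∧ G.dist u w ≠ G.dist v w := by
  obtain ⟨w, hwS, hw⟩ := hS u v (hK hu hv huv) huS hvS
  refine ⟨w, hwS, fun hwK => hw ?_, hw⟩
  have hwu : u ≠ w := fun h => huS (h ▸ hwS)
  have hwv : v ≠ w := fun h => hvS (h ▸ hwS)
  rw [dist_eq_one_iff_adj.mpr (hK hu hwK hwu), dist_eq_one_iff_adj.mpr (hK hv hwK hwv)]

variable [Fintype W]

lemma le_dimL {k : ℕ} (h : ∀ S, IsLocalResolving G S → k ≤ #S) : k ≤ dimL G :=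
  le_csInf ⟨_, univ, rfl, fun u _ _ hu => absurd (mem_univ u) hu⟩ fun _ ⟨S, hS, hres⟩ =>
    hS ▸ h S hres

variable [DecidableEq W]

lemma isLocalResolving_compl_of_isIndepSet {T : Finset W} (hT : G.IsIndepSet (T : Set W)) :
    IsLocalResolving G Tᶜ := by
  intro u v huv hu hv
  rw [mem_compl, not_not] at hu hv
  exact absurd huv (hT hu hv huv.ne)

lemma dimL_le_card_sub_two (hG : G ≠ ⊤) : dimL G ≤ Fintype.card W - 2 := by
  obtain ⟨a, c, hac, hnadj⟩ := ne_top_iff_exists_not_adj.mp hG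
  have hres : IsLocalResolving G {a, c}ᶜ := isLocalResolving_compl_of_isIndepSet <| by
    rw [coe_pair, isIndepSet_iff, Set.pairwise_pair]
    exact fun _ => ⟨hnadj, fun h => hnadj h.symm⟩
  calc dimL G ≤ #({a, c}ᶜ) := dimL_le hres
    _ = Fintype.card W - 2 := by rw [card_compl, card_pair hac]

lemma IsLocalResolving.card_compl_le_one_of_top (hS : IsLocalResolving (⊤ : SimpleGraph W) S) :
    #Sᶜ ≤ 1 := by
  refine card_le_one.mpr fun u hu v hv => by_contra fun huv => ?_
  rw [mem_compl] at hu hv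
  obtain ⟨w, -, hw, -⟩ :=
    hS.exists_notMem_of_isClique (isClique_univ.mpr rfl) trivial trivial huv hu hv
  exact hw trivial

lemma card_sub_one_le_dimL_top : Fintype.card W - 1 ≤ dimL (⊤ : SimpleGraph W) :=
  le_dimL fun S hS => by
    have := hS.card_compl_le_one_of_top
    rw [card_compl] at this
    omega

lemma IsLocalResolving.card_compl_le_two (hS : IsLocalResolving G S) {x : W}
    (hK : G.IsClique ({x}ᶜ : Set W)) : #Sᶜ ≤ 2 := by
  have separated : ∀ u ∈ Sᶜ, ∀ v ∈ Sᶜ, u ≠ x → v ≠ x → u ≠ v →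
      x ∈ S ∧ G.dist x u ≠ G.dist x v := by
    intro u hu v hv hux hvx huv
    obtain ⟨w, hwS, hwx, hw⟩ := hS.exists_notMem_of_isClique hK hux hvx huv
      (mem_compl.mp hu) (mem_compl.mp hv)
    rw [Set.mem_compl_singleton_iff, not_not] at hwx
    rw [← hwx]
    exact ⟨hwS, by simpa only [dist_comm] using hw⟩
  by_contra! hcard
  obtain ⟨u, hu, v, hv, huv⟩ :=
    one_lt_card.mp (lt_of_lt_of_le (by omega) (pred_card_le_card_erase (a := x) (s := Sᶜ)))
  rw [mem_erase] at hu hv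
  have hxS := (separated u hu.2 v hv.2 hu.1 hv.1 huv).1
  have hne : ∀ t ∈ Sᶜ, t ≠ x := fun t ht h => mem_compl.mp ht (h ▸ hxS)
  obtain ⟨t₁, h₁, t₂, h₂, t₃, h₃, h₁₂, h₁₃, h₂₃⟩ := two_lt_card.mp hcard
  have d₁₂ := (separated _ h₁ _ h₂ (hne _ h₁) (hne _ h₂) h₁₂).2
  have d₁₃ := (separated _ h₁ _ h₃ (hne _ h₁) (hne _ h₃) h₁₃).2
  have d₂₃ := (separated _ h₂ _ h₃ (hne _ h₂) (hne _ h₃) h₂₃).2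
  have a₁₂ := (hK (hne _ h₁) (hne _ h₂) h₁₂).diff_dist_adj (u := x)
  have a₁₃ := (hK (hne _ h₁) (hne _ h₃) h₁₃).diff_dist_adj (u := x)
  have a₂₃ := (hK (hne _ h₂) (hne _ h₃) h₂₃).diff_dist_adj (u := x)
  omega

lemma card_sub_two_le_dimL {x : W} (hK : G.IsClique ({x}ᶜ : Set W)) :
    Fintype.card W - 2 ≤ dimL G :=
  le_dimL fun S hS => by
    have := hS.card_compl_le_two hK
    rw [card_compl] at this
    omega

lemma isTwinOff_of_not_isLocalResolving {u v w : W} (hnadj : ¬ G.Adj u v)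
    (h : ¬ IsLocalResolving G {u, v, w}ᶜ) :
    G.IsTwinOff {u, v, w} w u ∨ G.IsTwinOff {u, v, w} w v := by
  simp only [IsLocalResolving, mem_compl, not_not] at h
  push Not at h
  obtain ⟨p, q, hpq, hp, hq, hdist⟩ := h
  have twin : G.IsTwinOff {u, v, w} p q := ⟨hpq, fun z hz => by
    rw [← dist_eq_one_iff_adj, ← dist_eq_one_iff_adj, hdist z (by simpa using hz)]⟩
  simp only [mem_insert, mem_singleton] at hp hq
  rcases hp with rfl | rfl | rfl <;> rcases hq with rfl | rfl | rfl
  all_goals first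
    | exact absurd rfl hpq.ne
    | exact absurd hpq hnadj
    | exact absurd hpq.symm hnadj
    | exact Or.inl twin
    | exact Or.inl twin.symm
    | exact Or.inr twin
    | exact Or.inr twin.symm

lemma hasTwinInTriples_of_card_sub_two_le_dimL (h : Fintype.card W - 2 ≤ dimL G) :
    G.HasTwinInTriples := by
  intro u v w huv hwu hwv hnadj
  refine isTwinOff_of_not_isLocalResolving hnadj fun hres => ?_
  have hcard : #({u, v, w} : Finset W) = 3 := by
    rw [card_insert_of_notMem (by simp [huv, hwu.symm]), card_pair hwv.symm]
  have := dimL_le hres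
  rw [card_compl, hcard] at this
  have := hcard ▸ card_le_univ ({u, v, w} : Finset W)
  omega

end

theorem dimL_eq_card_sub_two_iff (G : SimpleGraph V) (hc : G.Connected)
    (h2 : 2 ≤ Fintype.card V) :
    dimL G = Fintype.card V - 2 ↔ G.cliqueNum = Fintype.card V - 1 := by
  constructor
  · intro hdim
    have hG : G ≠ ⊤ := by
      rintro rfl
      have := card_sub_one_le_dimL_top (W := V)
      omega
    obtain ⟨a, c, hac, hnadj⟩ := ne_top_iff_exists_not_adj.mp hG
    obtain ⟨x, hx⟩ := (hasTwinInTriples_of_card_sub_two_le_dimL hdim.ge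
      ).exists_isClique_compl_singleton hc hac hnadj
    have := cliqueNum_lt_card hG
    have := hx.card_sub_one_le_cliqueNum
    omega
  · intro hω
    have hG : G ≠ ⊤ := by
      rintro rfl
      rw [cliqueNum_top] at hω
      omega
    obtain ⟨x, hx⟩ := exists_isClique_compl_singleton_of_cliqueNum (by omega) hω
    exact le_antisymm (dimL_le_card_sub_two hG) (card_sub_two_le_dimL hx)
end
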